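/- Let 1 ≤ r < d, let G be a Gaussian mixture density with k components on ℝ^r, and let γ(v) = (2π)^{−(d−r)/2} det(Θ)^{−1/2} exp(−(1/2) vᵀ Θ^{-1} v) be a centered Gaussian density on ℝ^{d−r} with positive definite covariance Θ. Then Φ̃(u,v) = G(u) γ(v) is a Gaussian mixture density with k components on ℝ^d, it is homoscedastic whenever G is homoscedastic, and its modal set satisfies Mode(Φ̃) = Mode(G) × {0}. In particular, if Mode(G) is finite then Mode(Φ̃) is finite with the same cardinality, and isolated modes of G lift to isolated modes of Φ̃. -/

import Mathlib

open scoped BigOperators RealInnerProductSpace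
open Matrix

/-- The density of a (nondegenerate) Gaussian with mean `μ` and covariance matrix `S`
on the Euclidean space indexed by `ι`. -/
noncomputable def gaussianPdf {ι : Type*} [Fintype ι] [DecidableEq ι]
    (μ : EuclideanSpace ℝ ι) (S : Matrix ι ι ℝ) (x : EuclideanSpace ℝ ι) : ℝ :=
  (2 * Real.pi) ^ (-(Fintype.card ι : ℝ) / 2) * S.det ^ (-(1 : ℝ) / 2) *
    Real.exp (-(1 / 2 : ℝ) * ((fun i => x i - μ i) ⬝ᵥ (S⁻¹ *ᵥ (fun i => x i - μ i))))

/-- A `k`-component Gaussian mixture density. -/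
noncomputable def mixturePdf {ι : Type*} [Fintype ι] [DecidableEq ι] {k : ℕ}
    (α : Fin k → ℝ) (μ : Fin k → EuclideanSpace ℝ ι) (S : Fin k → Matrix ι ι ℝ)
    (x : EuclideanSpace ℝ ι) : ℝ :=
  ∑ i, α i * gaussianPdf (μ i) (S i) x

/-- `Φ` is a Gaussian mixture density with weights `α`, means `μ`,
and (positive definite) covariance matrices `S`. -/
def IsGaussianMixture {ι : Type*} [Fintype ι] [DecidableEq ι] {k : ℕ}
    (Φ : EuclideanSpace ℝ ι → ℝ) (α : Fin k → ℝ) (μ : Fin k → EuclideanSpace ℝ ι)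
    (S : Fin k → Matrix ι ι ℝ) : Prop :=
  (∀ i, 0 < α i) ∧ (∑ i, α i) = 1 ∧ (∀ i, (S i).PosDef) ∧
    ∀ x, Φ x = mixturePdf α μ S x

/-- The Hessian matrix of `f : ℝ^ι → ℝ` at `x`. -/
noncomputable def hessianMatrix {ι : Type*} [Fintype ι] [DecidableEq ι]
    (f : EuclideanSpace ℝ ι → ℝ) (x : EuclideanSpace ℝ ι) : Matrix ι ι ℝ :=
  Matrix.of fun i j =>
    iteratedFDeriv ℝ 2 f x ![EuclideanSpace.single i 1, EuclideanSpace.single j 1]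

/-!
Each component of `G` times `γ` is the Gaussian on `ℝ^r × ℝ^{d-r}` with mean `(μᵢ, 0)` and
block-diagonal covariance `diag(Sᵢ, Θ)`, so `Φ̃` is a mixture with the same weights. For the
modes: a product `f(u) g(v)` of positive functions has a local maximum at `(u, v)` exactly when
`f` has one at `u` and `g` has one at `v`, and a nondegenerate Gaussian has its mean as its only
local maximum, because it strictly increases along every segment towards the mean.
-/

namespace Matrix

variable {m n R : Type*} [Fintype m] [Fintype n] [CommRing R] [PartialOrder R] [IsOrderedRing R]
  [StarRing R]

theorem PosDef.fromBlocks_zero {A : Matrix m m R} {D : Matrix n n R} (hA : A.PosDef)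
    (hD : D.PosDef) : (fromBlocks A 0 0 D).PosDef := by
  rw [posDef_iff_dotProduct_mulVec]
  refine ⟨hA.isHermitian.fromBlocks (by simp) hD.isHermitian, fun x hx => ?_⟩
  have hstar (a : m → R) (b : n → R) : star (Sum.elim a b) = Sum.elim (star a) (star b) := by
    funext w; cases w <;> rfl
  rw [← Sum.elim_comp_inl_inr x, fromBlocks_mulVec, hstar]
  simp only [zero_mulVec, add_zero, zero_add, Sum.elim_comp_inl, Sum.elim_comp_inr,
    sumElim_dotProduct_sumElim]
  have hA₀ := hA.posSemidef.dotProduct_mulVec_nonneg (x ∘ Sum.inl)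
  have hD₀ := hD.posSemidef.dotProduct_mulVec_nonneg (x ∘ Sum.inr)
  by_cases hl : x ∘ Sum.inl = 0
  · have hr : x ∘ Sum.inr ≠ 0 := fun hr => hx (by rw [← Sum.elim_comp_inl_inr x, hl, hr]; simp)
    exact add_pos_of_nonneg_of_pos hA₀ (hD.dotProduct_mulVec_pos hr)
  · exact add_pos_of_pos_of_nonneg (hA.dotProduct_mulVec_pos hl) hD₀

end Matrix

section Gaussian

variable {ι κ : Type*} [Fintype ι] [DecidableEq ι] [Fintype κ] [DecidableEq κ]

theorem gaussianPdf_pos (μ : EuclideanSpace ℝ ι) {S : Matrix ι ι ℝ} (hS : S.PosDef)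
    (x : EuclideanSpace ℝ ι) : 0 < gaussianPdf μ S x := by
  unfold gaussianPdf
  have := hS.det_pos
  positivity

theorem gaussianPdf_fromBlocks (μ : EuclideanSpace ℝ ι) (ν : EuclideanSpace ℝ κ)
    {A : Matrix ι ι ℝ} {D : Matrix κ κ ℝ} (hA : A.PosDef) (hD : D.PosDef)
    (z : EuclideanSpace ℝ (ι ⊕ κ)) :
    gaussianPdf (WithLp.toLp 2 (Sum.elim μ ν)) (fromBlocks A 0 0 D) z =
      gaussianPdf μ A (WithLp.toLp 2 fun i => z (Sum.inl i)) *
        gaussianPdf ν D (WithLp.toLp 2 fun j => z (Sum.inr j)) := by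
  have hinv : (fromBlocks A 0 0 D)⁻¹ = fromBlocks A⁻¹ 0 0 D⁻¹ := by
    simpa using inv_fromBlocks_zero₂₁_of_isUnit_iff A 0 D
      (iff_of_true hA.isUnit hD.isUnit)
  have hcard : -(Fintype.card (ι ⊕ κ) : ℝ) / 2 =
      -(Fintype.card ι : ℝ) / 2 + -(Fintype.card κ : ℝ) / 2 := by
    rw [Fintype.card_sum]; push_cast; ring
  have hdiff : (fun w => z w - (WithLp.toLp 2 (Sum.elim μ ν) : EuclideanSpace ℝ (ι ⊕ κ)) w) =
      Sum.elim (fun i => z (Sum.inl i) - μ i) (fun j => z (Sum.inr j) - ν j) := by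
    funext w; cases w <;> rfl
  unfold gaussianPdf
  rw [hcard, Real.rpow_add (by positivity), det_fromBlocks_zero₂₁,
    Real.mul_rpow hA.det_pos.le hD.det_pos.le, hdiff, hinv, fromBlocks_mulVec]
  simp only [zero_mulVec, add_zero, zero_add, Sum.elim_comp_inl, Sum.elim_comp_inr,
    sumElim_dotProduct_sumElim, mul_add, Real.exp_add]
  ring

theorem IsGaussianMixture.pos {k : ℕ} {Φ : EuclideanSpace ℝ ι → ℝ} {α : Fin k → ℝ}
    {μ : Fin k → EuclideanSpace ℝ ι} {S : Fin k → Matrix ι ι ℝ} (hΦ : IsGaussianMixture Φ α μ S)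
    (x : EuclideanSpace ℝ ι) : 0 < Φ x := by
  obtain ⟨hα, hsum, hS, hΦx⟩ := hΦ
  have hk : (Finset.univ : Finset (Fin k)).Nonempty :=
    Finset.nonempty_of_sum_ne_zero (hsum ▸ one_ne_zero)
  rw [hΦx]
  exact Finset.sum_pos (fun i _ => mul_pos (hα i) (gaussianPdf_pos _ (hS i) x)) hk

theorem IsGaussianMixture.mul_gaussianPdf {k : ℕ} {Φ : EuclideanSpace ℝ ι → ℝ}
    {α : Fin k → ℝ} {μ : Fin k → EuclideanSpace ℝ ι} {S : Fin k → Matrix ι ι ℝ}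
    (hΦ : IsGaussianMixture Φ α μ S) (ν : EuclideanSpace ℝ κ) {Θ : Matrix κ κ ℝ}
    (hΘ : Θ.PosDef) :
    IsGaussianMixture
      (fun z : EuclideanSpace ℝ (ι ⊕ κ) =>
        Φ (WithLp.toLp 2 fun i => z (Sum.inl i)) *
          gaussianPdf ν Θ (WithLp.toLp 2 fun j => z (Sum.inr j)))
      α (fun i => WithLp.toLp 2 (Sum.elim (μ i) ν)) (fun i => fromBlocks (S i) 0 0 Θ) := by
  obtain ⟨hα, hsum, hS, hΦx⟩ := hΦ
  refine ⟨hα, hsum, fun i => (hS i).fromBlocks_zero hΘ, fun z => ?_⟩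
  simp only [hΦx, mixturePdf, Finset.sum_mul, mul_assoc, gaussianPdf_fromBlocks _ _ (hS _) hΘ]

theorem gaussianPdf_lt_gaussianPdf_iff (μ : EuclideanSpace ℝ ι) {S : Matrix ι ι ℝ}
    (hS : S.PosDef) (x y : EuclideanSpace ℝ ι) :
    gaussianPdf μ S x < gaussianPdf μ S y ↔
      (fun i => y i - μ i) ⬝ᵥ (S⁻¹ *ᵥ fun i => y i - μ i) <
        (fun i => x i - μ i) ⬝ᵥ (S⁻¹ *ᵥ fun i => x i - μ i) := by
  unfold gaussianPdf
  have := hS.det_pos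
  rw [mul_lt_mul_iff_right₀ (by positivity), Real.exp_lt_exp]
  constructor <;> intro h <;> linarith

theorem gaussianPdf_le_gaussianPdf_mean (μ : EuclideanSpace ℝ ι) {S : Matrix ι ι ℝ}
    (hS : S.PosDef) (x : EuclideanSpace ℝ ι) : gaussianPdf μ S x ≤ gaussianPdf μ S μ := by
  refine not_lt.mp fun h => ?_
  rw [gaussianPdf_lt_gaussianPdf_iff μ hS] at h
  have := hS.inv.posSemidef.dotProduct_mulVec_nonneg fun i => x i - μ i
  simp at h this
  linarith

theorem gaussianPdf_lt_gaussianPdf_smul_add (μ : EuclideanSpace ℝ ι) {S : Matrix ι ι ℝ}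
    (hS : S.PosDef) {x : EuclideanSpace ℝ ι} (hx : x ≠ μ) {t : ℝ} (ht : |t| < 1) :
    gaussianPdf μ S x < gaussianPdf μ S (t • (x - μ) + μ) := by
  set v : ι → ℝ := fun i => x i - μ i
  have hv : v ≠ 0 := fun h => hx (by ext i; simpa [v, sub_eq_zero] using congrFun h i)
  have hpath : (fun i => (t • (x - μ) + μ) i - μ i) = t • v := by
    funext i; simp [v]
  have hq : 0 < v ⬝ᵥ S⁻¹ *ᵥ v := by simpa using hS.inv.dotProduct_mulVec_pos hv
  have ht2 : t ^ 2 < 1 := (sq_lt_one_iff_abs_lt_one t).mpr ht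
  rw [gaussianPdf_lt_gaussianPdf_iff μ hS, hpath, mulVec_smul, dotProduct_smul, smul_dotProduct,
    smul_eq_mul, smul_eq_mul, ← mul_assoc, ← sq]
  nlinarith

theorem isLocalMax_gaussianPdf_iff (μ : EuclideanSpace ℝ ι) {S : Matrix ι ι ℝ} (hS : S.PosDef)
    (x : EuclideanSpace ℝ ι) : IsLocalMax (gaussianPdf μ S) x ↔ x = μ := by
  refine ⟨fun hmax => by_contra fun hx => ?_, ?_⟩
  · have hpath : Filter.Tendsto (fun t : ℝ => t • (x - μ) + μ) (nhdsWithin 1 (Set.Iio 1))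
        (nhds x) :=
      (Continuous.tendsto' (by fun_prop) 1 x (by simp)).mono_left nhdsWithin_le_nhds
    obtain ⟨t, hle, ht⟩ :=
      ((hpath.eventually hmax).and (Ioo_mem_nhdsLT (show (0 : ℝ) < 1 by norm_num))).exists
    have habs : |t| < 1 := abs_lt.mpr ⟨by linarith [ht.1], ht.2⟩
    exact (gaussianPdf_lt_gaussianPdf_smul_add μ hS hx habs).not_ge hle
  · rintro rfl
    exact (isMaxOn_univ_iff.mpr (gaussianPdf_le_gaussianPdf_mean x hS)).isLocalMax Filter.univ_mem

end Gaussian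

section LocalMax

variable {X Y : Type*} [TopologicalSpace X] [TopologicalSpace Y]

theorem Homeomorph.isLocalMax_comp_iff {β : Type*} [Preorder β] (e : X ≃ₜ Y) {F : Y → β}
    {x : X} : IsLocalMax (F ∘ e) x ↔ IsLocalMax F (e x) := by
  rw [IsLocalMax, IsMaxFilter, IsLocalMax, IsMaxFilter, ← e.map_nhds_eq, Filter.eventually_map]
  rfl

theorem isLocalMax_mul_iff {f : X → ℝ} {g : Y → ℝ} (hf : ∀ x, 0 < f x) (hg : ∀ y, 0 < g y)
    (p : X × Y) :
    IsLocalMax (fun q : X × Y => f q.1 * g q.2) p ↔ IsLocalMax f p.1 ∧ IsLocalMax g p.2 := by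
  refine ⟨fun h => ⟨?_, ?_⟩, fun ⟨h₁, h₂⟩ => ?_⟩
  · have := h.comp_continuous (g := fun x => (x, p.2)) (by fun_prop)
    exact Filter.Eventually.mono this fun x hx => le_of_mul_le_mul_right hx (hg p.2)
  · have := h.comp_continuous (g := fun y => (p.1, y)) (by fun_prop)
    exact Filter.Eventually.mono this fun y hy => le_of_mul_le_mul_left hy (hf p.1)
  · have h₁' := h₁.comp_continuous (g := Prod.fst) continuous_fst.continuousAt
    have h₂' := h₂.comp_continuous (g := Prod.snd) continuous_snd.continuousAt
    exact Filter.Eventually.mono (h₁'.and h₂') fun q hq =>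
      mul_le_mul hq.1 hq.2 (hg _).le (hf _).le

theorem setOf_isLocalMax_mul_eq_prod {f : X → ℝ} {g : Y → ℝ} (hf : ∀ x, 0 < f x)
    (hg : ∀ y, 0 < g y) {y₀ : Y} (hy₀ : ∀ y, IsLocalMax g y ↔ y = y₀) :
    {p : X × Y | IsLocalMax (fun q => f q.1 * g q.2) p} = {x | IsLocalMax f x} ×ˢ {y₀} := by
  ext p
  simp [isLocalMax_mul_iff hf hg, hy₀]

end LocalMax

theorem dimension_lifting_general
    {r d k : ℕ}
    (α : Fin k → ℝ) (μ : Fin k → EuclideanSpace ℝ (Fin r))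
    (S : Fin k → Matrix (Fin r) (Fin r) ℝ)
    (G : EuclideanSpace ℝ (Fin r) → ℝ)
    (hG : IsGaussianMixture G α μ S)
    (Θ : Matrix (Fin (d - r)) (Fin (d - r)) ℝ) (hΘ : Θ.PosDef)
    (Φt : EuclideanSpace ℝ (Fin r ⊕ Fin (d - r)) → ℝ)
    (hΦt : ∀ z, Φt z =
      G (WithLp.toLp 2 (fun i => z (Sum.inl i))) *
        gaussianPdf (0 : EuclideanSpace ℝ (Fin (d - r))) Θ (WithLp.toLp 2 (fun j => z (Sum.inr j)))) :
    (∃ (α' : Fin k → ℝ) (μ' : Fin k → EuclideanSpace ℝ (Fin r ⊕ Fin (d - r)))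
        (S' : Fin k → Matrix (Fin r ⊕ Fin (d - r)) (Fin r ⊕ Fin (d - r)) ℝ),
      IsGaussianMixture Φt α' μ' S' ∧
      ((∀ i j, S i = S j) → ∀ i j, S' i = S' j)) ∧
    {z : EuclideanSpace ℝ (Fin r ⊕ Fin (d - r)) | IsLocalMax Φt z} =
      {z : EuclideanSpace ℝ (Fin r ⊕ Fin (d - r)) |
        IsLocalMax G (WithLp.toLp 2 (fun i => z (Sum.inl i))) ∧ ∀ j, z (Sum.inr j) = 0} ∧
    ({u : EuclideanSpace ℝ (Fin r) | IsLocalMax G u}.Finite →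
      {z : EuclideanSpace ℝ (Fin r ⊕ Fin (d - r)) | IsLocalMax Φt z}.Finite ∧
      {z : EuclideanSpace ℝ (Fin r ⊕ Fin (d - r)) | IsLocalMax Φt z}.ncard =
        {u : EuclideanSpace ℝ (Fin r) | IsLocalMax G u}.ncard) ∧
    ∀ u : EuclideanSpace ℝ (Fin r), IsLocalMax G u →
      (∃ U ∈ nhds u, {w : EuclideanSpace ℝ (Fin r) | IsLocalMax G w} ∩ U = {u}) →
      ∃ V ∈ nhds ((WithLp.toLp 2 (Sum.elim u (fun _ => 0))) : EuclideanSpace ℝ (Fin r ⊕ Fin (d - r))),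
        {z : EuclideanSpace ℝ (Fin r ⊕ Fin (d - r)) | IsLocalMax Φt z} ∩ V =
          {((WithLp.toLp 2 (Sum.elim u (fun _ => 0))) : EuclideanSpace ℝ (Fin r ⊕ Fin (d - r)))} := by
  set e : EuclideanSpace ℝ (Fin r ⊕ Fin (d - r)) ≃ₜ
      EuclideanSpace ℝ (Fin r) × EuclideanSpace ℝ (Fin (d - r)) :=
    EuclideanSpace.sumEquivProd.toHomeomorph
  have hΦt_eq : Φt = (fun p => G p.1 * gaussianPdf 0 Θ p.2) ∘ e := funext hΦt
  have hmode : {z | IsLocalMax Φt z} = e ⁻¹' ({u | IsLocalMax G u} ×ˢ {0}) := by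
    rw [← setOf_isLocalMax_mul_eq_prod hG.pos (gaussianPdf_pos 0 hΘ)
      (isLocalMax_gaussianPdf_iff 0 hΘ), hΦt_eq]
    ext z
    exact e.isLocalMax_comp_iff
  refine ⟨⟨_, _, _, funext hΦt ▸ hG.mul_gaussianPdf 0 hΘ, fun h i j => by rw [h i j]⟩,
    ?_, fun hfin => ⟨?_, ?_⟩, ?_⟩
  · rw [hmode]
    ext z
    simp [e, WithLp.ext_iff, funext_iff]
  · rw [hmode]
    exact (hfin.prod (Set.finite_singleton 0)).preimage e.injective.injOn
  · rw [hmode, Set.ncard_preimage_of_injective_subset_range e.injective (by simp),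
      Set.ncard_prod, Set.ncard_singleton, mul_one]
  · rintro u - ⟨U, hU, hUu⟩
    refine ⟨e ⁻¹' (U ×ˢ Set.univ),
      e.continuous.continuousAt.preimage_mem_nhds (prod_mem_nhds hU Filter.univ_mem), ?_⟩
    rw [hmode, ← Set.preimage_inter, Set.prod_inter_prod, hUu, Set.inter_univ,
      Set.singleton_prod_singleton, ← e.image_symm, Set.image_singleton]
    rfl

/-- Proposition: dimension lifting preserves the modal set.
If $G$ is a $k$-component Gaussian mixture on $ℝ^r$ and $γ$ a centered Gaussian on
$ℝ^{d-r}$, then $Φ̃(u,v)=G(u)γ(v)$ is a $k$-component Gaussian mixture on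
$ℝ^d ≅ ℝ^r × ℝ^{d-r}$, homoscedastic whenever $G$ is, with
$\mathrm{Mode}(Φ̃)=\mathrm{Mode}(G)×\{0\}$; finiteness of the modal set and isolated modes
are preserved. -/
theorem dimension_lifting
    {r d k : ℕ} (hr : 1 ≤ r) (hrd : r < d)
    (α : Fin k → ℝ) (μ : Fin k → EuclideanSpace ℝ (Fin r))
    (S : Fin k → Matrix (Fin r) (Fin r) ℝ)
    (G : EuclideanSpace ℝ (Fin r) → ℝ)
    (hG : IsGaussianMixture G α μ S)
    (Θ : Matrix (Fin (d - r)) (Fin (d - r)) ℝ) (hΘ : Θ.PosDef)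
    (Φt : EuclideanSpace ℝ (Fin r ⊕ Fin (d - r)) → ℝ)
    (hΦt : ∀ z, Φt z =
      G (WithLp.toLp 2 (fun i => z (Sum.inl i))) *
        gaussianPdf (0 : EuclideanSpace ℝ (Fin (d - r))) Θ (WithLp.toLp 2 (fun j => z (Sum.inr j)))) :
    (∃ (α' : Fin k → ℝ) (μ' : Fin k → EuclideanSpace ℝ (Fin r ⊕ Fin (d - r)))
        (S' : Fin k → Matrix (Fin r ⊕ Fin (d - r)) (Fin r ⊕ Fin (d - r)) ℝ),
      IsGaussianMixture Φt α' μ' S' ∧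
      ((∀ i j, S i = S j) → ∀ i j, S' i = S' j)) ∧
    {z : EuclideanSpace ℝ (Fin r ⊕ Fin (d - r)) | IsLocalMax Φt z} =
      {z : EuclideanSpace ℝ (Fin r ⊕ Fin (d - r)) |
        IsLocalMax G (WithLp.toLp 2 (fun i => z (Sum.inl i))) ∧ ∀ j, z (Sum.inr j) = 0} ∧
    ({u : EuclideanSpace ℝ (Fin r) | IsLocalMax G u}.Finite →
      {z : EuclideanSpace ℝ (Fin r ⊕ Fin (d - r)) | IsLocalMax Φt z}.Finite ∧
      {z : EuclideanSpace ℝ (Fin r ⊕ Fin (d - r)) | IsLocalMax Φt z}.ncard =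
        {u : EuclideanSpace ℝ (Fin r) | IsLocalMax G u}.ncard) ∧
    ∀ u : EuclideanSpace ℝ (Fin r), IsLocalMax G u →
      (∃ U ∈ nhds u, {w : EuclideanSpace ℝ (Fin r) | IsLocalMax G w} ∩ U = {u}) →
      ∃ V ∈ nhds ((WithLp.toLp 2 (Sum.elim u (fun _ => 0))) : EuclideanSpace ℝ (Fin r ⊕ Fin (d - r))),
        {z : EuclideanSpace ℝ (Fin r ⊕ Fin (d - r)) | IsLocalMax Φt z} ∩ V =
          {((WithLp.toLp 2 (Sum.elim u (fun _ => 0))) : EuclideanSpace ℝ (Fin r ⊕ Fin (d - r)))} :=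
  dimension_lifting_general α μ S G hG Θ hΘ Φt hΦt
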